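/- arXiv:1202.5782 — 2 statements merged into one kernel-verified Lean document; each statement's English description precedes it below -/
import Mathlib

section
/- Let M be a Noetherian R-module. Then the following are equivalent for Spec^s(M) with the second classical Zariski topology: (a) it is a Hausdorff space; (b) it is a T1-space; (c) it is the cofinite topology; (d) it is discrete; (e) either Spec^s(M) = ∅ or Spec^s(M) = Min(M), the set of all minimal submodules of M. -/
/-!
If `T ⊆ S` are second submodules then every subbasic open set `W^s(N)` containing `T` contains
`S`, so `S` specializes to `T`; in a T1 space this forces `T = S`, and since in a Noetherian
module every nonzero submodule of a second submodule is again second, every second submodule is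
minimal. Conversely, when all second submodules are minimal, `{S} = V^{s*}(S)` is closed, and two
isomorphic minimal submodules `A`, `B` are equal, because `A + B` is second (both have the same
annihilator). Hence distinct minimal submodules lie in distinct isotypic components, which are
independent and therefore finitely many in a Noetherian module: `Spec^s(M)` is a finite T1 space,
i.e. finite and discrete.
-/


open Pointwise

variable (R M : Type*) [CommRing R] [AddCommGroup M] [Module R M]

/-- A nonzero submodule `S` is *second* if for every `r : R`, `r • S = S` or `r • S = ⊥`. -/
def IsSecondSubmodule (S : Submodule R M) : Prop :=
  S ≠ ⊥ ∧ ∀ r : R, r • S = S ∨ r • S = ⊥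

/-- The second spectrum of `M`: the collection of all second submodules of `M`. -/
def SecondSpec : Type _ := {S : Submodule R M // IsSecondSubmodule R M S}

/-- `V^{s*}(N)`: the set of second submodules contained in `N`. -/
def Vs (N : Submodule R M) : Set (SecondSpec R M) := {S | S.1 ≤ N}

/-- `W^s(N)`: the complement of `V^{s*}(N)` in `Spec^s(M)`. -/
def Ws (N : Submodule R M) : Set (SecondSpec R M) := (Vs R M N)ᶜ

/-- The second classical Zariski topology on `Spec^s(M)`, generated by the
sub-basis `{W^s(N) : N ≤ M}`. -/
instance secondZariski : TopologicalSpace (SecondSpec R M) :=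
  TopologicalSpace.generateFrom {U | ∃ N : Submodule R M, U = Ws R M N}

/-- The second socle of a submodule `N`: the sum of all second submodules of `M`
contained in `N`. -/
def secSocle (N : Submodule R M) : Submodule R M :=
  sSup {S : Submodule R M | IsSecondSubmodule R M S ∧ S ≤ N}

variable {R M}

namespace Submodule

theorem pointwise_smul_eq_bot_iff {r : R} {N : Submodule R M} :
    r • N = ⊥ ↔ r ∈ N.annihilator := by
  rw [eq_bot_iff, mem_annihilator]
  constructor
  · exact fun h n hn => (mem_bot R).mp (h (smul_mem_pointwise_smul n r N hn))
  · rintro h _ ⟨n, hn, rfl⟩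
    exact (mem_bot R).mpr (h n hn)

theorem pointwise_smul_eq_self_of_le [IsNoetherian R M] {r : R} {S T : Submodule R M}
    (hS : r • S = S) (hTS : T ≤ S) : r • T = T := by
  -- Write `t ∈ T` as `r ^ (n + 1) • y` with `y ∈ S`; once the increasing chain `(r ^ n)⁻¹ T`
  -- has stabilized at `n`, already `r ^ n • y ∈ T`.
  refine le_antisymm (smul_le_self_of_tower r T) fun t ht => ?_
  let f : ℕ →o Submodule R M :=
    ⟨fun n => T.comap (DistribSMul.toLinearMap R M (r ^ n)),
      monotone_nat_of_le_succ fun n y hy => by simpa [pow_succ', mul_smul] using T.smul_mem r hy⟩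
  obtain ⟨n, hn⟩ := monotone_stabilizes_iff_noetherian.mpr ‹_› f
  have hpow : (r ^ (n + 1)) • S = S := by
    induction n + 1 with
    | zero => rw [pow_zero, one_smul]
    | succ k ih => rw [pow_succ, mul_smul, hS, ih]
  obtain ⟨y, -, rfl⟩ := (mem_smul_pointwise_iff_exists _ _ _).mp (hpow.symm ▸ hTS ht : t ∈ _)
  have hy : y ∈ f n := by rw [hn (n + 1) n.le_succ]; exact ht
  rw [pow_succ', mul_smul]
  exact smul_mem_pointwise_smul _ r T hy

end Submodule

open Submodule

theorem IsAtom.isSecondSubmodule {A : Submodule R M} (hA : IsAtom A) :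
    IsSecondSubmodule R M A :=
  ⟨hA.1, fun r => ((smul_le_self_of_tower r A).lt_or_eq.imp_left (hA.2 _)).symm⟩

namespace IsSecondSubmodule

theorem of_le [IsNoetherian R M] {S T : Submodule R M} (hS : IsSecondSubmodule R M S)
    (hT : T ≠ ⊥) (hTS : T ≤ S) : IsSecondSubmodule R M T := by
  refine ⟨hT, fun r => (hS.2 r).imp (pointwise_smul_eq_self_of_le · hTS) fun h => ?_⟩
  exact le_bot_iff.mp (h ▸ smul_mono_right r hTS)

theorem sup_of_annihilator_eq {S T : Submodule R M} (hS : IsSecondSubmodule R M S)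
    (hT : IsSecondSubmodule R M T) (h : S.annihilator = T.annihilator) :
    IsSecondSubmodule R M (S ⊔ T) := by
  refine ⟨fun h0 => hS.1 (eq_bot_iff.mpr (h0 ▸ le_sup_left)), fun r => ?_⟩
  rw [smul_sup']
  rcases hS.2 r with hrS | hrS
  · have hrT : r • T = T := (hT.2 r).resolve_right fun hrT =>
      hS.1 (hrS.symm.trans (pointwise_smul_eq_bot_iff.mpr
        (h ▸ pointwise_smul_eq_bot_iff.mp hrT)))
    exact Or.inl (by rw [hrS, hrT])
  · have hrT : r • T = ⊥ := pointwise_smul_eq_bot_iff.mpr (h ▸ pointwise_smul_eq_bot_iff.mp hrS)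
    exact Or.inr (by rw [hrS, hrT, bot_sup_eq])

end IsSecondSubmodule

theorem setOf_isAtom_finite_of_linearEquiv_imp_eq [IsNoetherian R M]
    (h : ∀ A B : Submodule R M, IsAtom A → IsAtom B → Nonempty (A ≃ₗ[R] B) → A = B) :
    {A : Submodule R M | IsAtom A}.Finite := by
  have hsimple : ∀ A : Submodule R M, IsAtom A → IsSimpleModule R A :=
    fun A => isSimpleModule_iff_isAtom.mpr
  refine Set.Finite.of_finite_image (f := fun A => isotypicComponent R M A) ?_ ?_
  · refine (WellFoundedGT.finite_of_sSupIndep (sSupIndep_isotypicComponents R M)).subset ?_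
    rintro _ ⟨A, hA, rfl⟩
    exact ⟨A, hsimple A hA, rfl⟩
  · intro A hA B hB hAB
    have := hsimple A hA
    have := hsimple B hB
    obtain ⟨e⟩ := isIsotypicOfType_submodule_iff.mp (IsIsotypicOfType.isotypicComponent R M A) B
      (B.le_isotypicComponent.trans hAB.ge)
    exact (h B A hB hA ⟨e⟩).symm

variable (R M) in
theorem setOf_isSecondSubmodule_eq_empty_or_eq_atoms_iff :
    ({S : Submodule R M | IsSecondSubmodule R M S} = ∅ ∨
      {S : Submodule R M | IsSecondSubmodule R M S} = {S : Submodule R M | IsAtom S}) ↔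
      ∀ s : SecondSpec R M, IsAtom s.1 := by
  refine ⟨fun h s => ?_, fun h => Or.inr ?_⟩
  · rcases h with h | h
    · exact (h.subset s.2).elim
    · exact h.subset s.2
  · exact Set.Subset.antisymm (fun S hS => h ⟨S, hS⟩) fun _ => IsAtom.isSecondSubmodule

namespace SecondSpec

theorem isOpen_Ws (N : Submodule R M) : IsOpen (Ws R M N) :=
  TopologicalSpace.isOpen_generateFrom_of_mem ⟨N, rfl⟩

theorem specializes_of_le {s t : SecondSpec R M} (h : s.1 ≤ t.1) : t ⤳ s := by
  refine specializes_iff_nhds.mpr (le_of_le_of_eq ?_ TopologicalSpace.nhds_generateFrom.symm)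
  refine le_iInf₂ fun U ⟨hsU, N, hU⟩ => Filter.le_principal_iff.mpr ?_
  subst hU
  exact (isOpen_Ws N).mem_nhds fun htN => hsU (h.trans htN)

theorem isAtom_of_t1Space [IsNoetherian R M] [T1Space (SecondSpec R M)] (s : SecondSpec R M) :
    IsAtom s.1 := by
  refine ⟨s.2.1, fun T hT => by_contra fun hT0 => hT.ne ?_⟩
  let t : SecondSpec R M := ⟨T, s.2.of_le hT0 hT.le⟩
  have hst : s ⤳ t := specializes_of_le hT.le
  exact congrArg Subtype.val (specializes_iff_eq.mp hst).symm

variable (h : ∀ s : SecondSpec R M, IsAtom s.1)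
include h

theorem t1Space_of_forall_isAtom : T1Space (SecondSpec R M) := by
  refine ⟨fun s => ?_⟩
  have : {s} = Vs R M s.1 := Set.ext fun t =>
    ⟨fun ht => ht ▸ le_refl s.1, fun ht => Subtype.ext (((h s).le_iff_eq (h t).1).mp ht)⟩
  exact this ▸ isOpen_compl_iff.mp (isOpen_Ws s.1)

theorem finite_of_forall_isAtom [IsNoetherian R M] : Finite (SecondSpec R M) := by
  refine (setOf_isAtom_finite_of_linearEquiv_imp_eq fun A B hA hB ⟨e⟩ => ?_).subset
    (fun S hS => h ⟨S, hS⟩) |>.to_subtype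
  have hAB := h ⟨A ⊔ B, hA.isSecondSubmodule.sup_of_annihilator_eq hB.isSecondSubmodule
    e.annihilator_eq⟩
  exact ((hAB.le_iff_eq hA.1).mp le_sup_left).trans ((hAB.le_iff_eq hB.1).mp le_sup_right).symm

end SecondSpec

variable (R M)

/-- Thm 3.75: for a Noetherian module `M`, Hausdorff, T1, cofinite, discrete and
(`Spec^s(M) = ∅` or `Spec^s(M) = Min(M)`) are all equivalent for `Spec^s(M)`. -/
theorem stmt10 [IsNoetherian R M] :
    List.TFAE
      [ T2Space (SecondSpec R M),
        T1Space (SecondSpec R M),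
        (∀ U : Set (SecondSpec R M), IsOpen U ↔ (U = ∅ ∨ Uᶜ.Finite)),
        DiscreteTopology (SecondSpec R M),
        ({S : Submodule R M | IsSecondSubmodule R M S} = ∅ ∨
          {S : Submodule R M | IsSecondSubmodule R M S} = {S : Submodule R M | IsAtom S}) ] := by
  rw [setOf_isSecondSubmodule_eq_empty_or_eq_atoms_iff]
  tfae_have 1 → 2 := fun _ => inferInstance
  tfae_have 2 → 5 := fun _ => SecondSpec.isAtom_of_t1Space
  tfae_have 5 → 4 := fun h =>
    have := SecondSpec.t1Space_of_forall_isAtom h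
    have := SecondSpec.finite_of_forall_isAtom h
    inferInstance
  tfae_have 4 → 1 := fun _ => inferInstance
  tfae_have 5 → 3 := fun h U =>
    have := SecondSpec.finite_of_forall_isAtom h
    have := tfae_5_to_4 h
    ⟨fun _ => Or.inr (Set.toFinite _), fun _ => isOpen_discrete U⟩
  tfae_have 3 → 2 := fun h =>
    ⟨fun s => isOpen_compl_iff.mp ((h _).mpr (Or.inr (by simp)))⟩
  tfae_finish
end

section
/- Let M be an R-module and endow Spec^s(M) with the second classical Zariski topology. (a) If Y is a finite subset of Spec^s(M), then the closure of Y equals ∪_{S ∈ Y} V^{s*}(S). (b) If Y is a closed subset of Spec^s(M), then Y = ∪_{S ∈ Y} V^{s*}(S). -/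
/-! The closure of a point `S` is `V^{s*}(S)`: the sub-basic open sets `W^s(N)` are upward closed
under inclusion, so `S` specializes to `T` exactly when `T ⊆ S`. A closed set is stable under
specialization, hence the union of the closures of its points, and closure commutes with finite
unions. -/

open Pointwise

variable (R M : Type*) [CommRing R] [AddCommGroup M] [Module R M]

theorem isClosed_Vs (N : Submodule R M) : IsClosed (Vs R M N) :=
  ⟨TopologicalSpace.isOpen_generateFrom_of_mem ⟨N, rfl⟩⟩

theorem specializes_iff_le {S T : SecondSpec R M} : S ⤳ T ↔ T.1 ≤ S.1 := by
  refine ⟨fun h ↦ h.mem_closed (isClosed_Vs R M S.1) (le_refl S.1), fun hTS ↦ ?_⟩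
  simp_rw [Specializes, TopologicalSpace.nhds_generateFrom, le_iInf₂_iff]
  rintro _ ⟨hT, N, rfl⟩
  exact iInf₂_le _ ⟨fun hSN ↦ hT (hTS.trans hSN), N, rfl⟩

theorem closure_singleton_eq_Vs (S : SecondSpec R M) : closure {S} = Vs R M S.1 :=
  Set.ext fun _ ↦ specializes_iff_mem_closure.symm.trans (specializes_iff_le R M)

/-- Prop 2.200(a),(b): in `Spec^s(M)`, the closure of a finite set `Y` is
`⋃_{S ∈ Y} V^{s*}(S)`, and every closed set `Y` equals `⋃_{S ∈ Y} V^{s*}(S)`. -/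
theorem stmt13 :
    (∀ Y : Set (SecondSpec R M), Y.Finite →
        closure Y = ⋃ S ∈ Y, Vs R M S.1) ∧
      (∀ Y : Set (SecondSpec R M), IsClosed Y →
        Y = ⋃ S ∈ Y, Vs R M S.1) := by
  simp_rw [← closure_singleton_eq_Vs]
  refine ⟨fun Y hY ↦ ?_, fun Y hY ↦ hY.stableUnderSpecialization.Union_eq.symm⟩
  rw [← hY.closure_biUnion, Set.biUnion_of_singleton]
end
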